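/- arXiv:2407.00457 — 4 statements merged into one kernel-verified Lean document; each statement's English description precedes it below -/
import Mathlib

section
/- Let n ≥ 1 be a natural number, let a and d be real numbers with a > d ≥ 0, let b ∈ (0,∞), and let α_1, …, α_n ∈ [0, π). Suppose u_1, …, u_n and v_1, …, v_n are complex numbers with |u_j − a| ≤ d and |v_j − a| ≤ d for every j. Set w = Σ_{j=1}^n u_j/(1 + b e^{iα_j}) + Σ_{j=1}^n v_j/(1 + b^{-1} e^{-iα_j}). Then a·n − d·Σ_{j=1}^n sec(α_j/2) ≤ Re(w) ≤ a·n + d·Σ_{j=1}^n sec(α_j/2). -/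
/-!
With `x = b e^{iα}` the `j`-th pair of terms is `u/(1 + x) + v/(1 + x⁻¹)`, and subtracting `a`
leaves `((u - a) + (v - a) x)/(1 + x)`, whose numerator has norm at most `d (1 + b)`.
The denominator satisfies `|1 + b e^{iα}|² = (1 + b)² cos²(α/2) + (1 - b)² sin²(α/2)`,
so each pair lies within `d sec(α/2)` of `a`, and the real part of the sum lies within
`d ∑ sec(α_j/2)` of `a n`.
-/

open Real Finset

theorem div_one_add_add_div_one_add_inv_sub {K : Type*} [Field K] {x : K} (hx : x ≠ 0)
    (hx₁ : 1 + x ≠ 0) (u v a : K) :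
    u / (1 + x) + v / (1 + x⁻¹) - a = (u - a + (v - a) * x) / (1 + x) := by
  have hx₁' : 1 + x⁻¹ = (1 + x) / x := by field_simp; ring
  rw [hx₁']
  field_simp
  ring

theorem norm_div_one_add_add_div_one_add_inv_sub_le {K : Type*} [NormedField K] {x : K}
    (hx : x ≠ 0) (hx₁ : 1 + x ≠ 0) {u v a : K} {d : ℝ} (hu : ‖u - a‖ ≤ d) (hv : ‖v - a‖ ≤ d) :
    ‖u / (1 + x) + v / (1 + x⁻¹) - a‖ ≤ d * (1 + ‖x‖) / ‖1 + x‖ := by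
  rw [div_one_add_add_div_one_add_inv_sub hx hx₁, norm_div]
  gcongr
  calc ‖u - a + (v - a) * x‖ ≤ ‖u - a‖ + ‖v - a‖ * ‖x‖ := by
        simpa only [norm_mul] using norm_add_le (u - a) ((v - a) * x)
    _ ≤ d + d * ‖x‖ := by gcongr
    _ = d * (1 + ‖x‖) := by ring

theorem norm_one_add_mul_exp_sq (b θ : ℝ) :
    ‖1 + (b : ℂ) * Complex.exp (Complex.I * θ)‖ ^ 2 = 1 + 2 * b * Real.cos θ + b ^ 2 := by
  rw [Complex.sq_norm, mul_comm Complex.I, Complex.exp_mul_I, Complex.normSq_apply]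
  simp only [Complex.add_re, Complex.add_im, Complex.mul_re, Complex.mul_im, Complex.one_re,
    Complex.one_im, Complex.ofReal_re, Complex.ofReal_im, Complex.I_re, Complex.I_im,
    ← Complex.ofReal_cos, ← Complex.ofReal_sin]
  nlinarith [Real.sin_sq_add_cos_sq θ]

theorem mul_cos_half_le_norm_one_add_mul_exp (b θ : ℝ) :
    (1 + b) * Real.cos (θ / 2) ≤ ‖1 + (b : ℂ) * Complex.exp (Complex.I * θ)‖ := by
  refine le_of_sq_le_sq ?_ (norm_nonneg _)
  have hcos : Real.cos θ = 2 * Real.cos (θ / 2) ^ 2 - 1 := by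
    rw [← Real.cos_two_mul, mul_div_cancel₀ θ two_ne_zero]
  rw [norm_one_add_mul_exp_sq, hcos]
  -- the difference is `(1 - b)² sin²(θ/2)`
  nlinarith [Real.sin_sq_add_cos_sq (θ / 2),
    mul_nonneg (sq_nonneg (1 - b)) (sq_nonneg (Real.sin (θ / 2)))]

theorem norm_div_add_div_sub_le_mul_sec {b θ d : ℝ} {u v a : ℂ} (hb : 0 < b)
    (hθ : 0 < Real.cos (θ / 2)) (hu : ‖u - a‖ ≤ d) (hv : ‖v - a‖ ≤ d) :
    ‖u / (1 + (b : ℂ) * Complex.exp (Complex.I * θ))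
        + v / (1 + (b : ℂ)⁻¹ * Complex.exp (-(Complex.I * θ))) - a‖
      ≤ d * (1 / Real.cos (θ / 2)) := by
  set x := (b : ℂ) * Complex.exp (Complex.I * θ)
  have hx : x ≠ 0 := mul_ne_zero (Complex.ofReal_ne_zero.mpr hb.ne') (Complex.exp_ne_zero _)
  have hnorm_x : ‖x‖ = b := by
    rw [norm_mul, Complex.norm_exp_I_mul_ofReal, mul_one, Complex.norm_of_nonneg hb.le]
  have hlower : (1 + b) * Real.cos (θ / 2) ≤ ‖1 + x‖ := mul_cos_half_le_norm_one_add_mul_exp b θ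
  have hpos : 0 < (1 + b) * Real.cos (θ / 2) := by positivity
  have hx₁ : 1 + x ≠ 0 := norm_pos_iff.mp (hpos.trans_le hlower)
  have hx_inv : (b : ℂ)⁻¹ * Complex.exp (-(Complex.I * θ)) = x⁻¹ := by
    rw [Complex.exp_neg, mul_inv]
  have hd : 0 ≤ d := (norm_nonneg _).trans hu
  rw [hx_inv]
  calc _ ≤ d * (1 + ‖x‖) / ‖1 + x‖ := norm_div_one_add_add_div_one_add_inv_sub_le hx hx₁ hu hv
    _ ≤ d * (1 + b) / ((1 + b) * Real.cos (θ / 2)) := by rw [hnorm_x]; gcongr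
    _ = d * (1 / Real.cos (θ / 2)) := by field_simp

theorem stmt_0_general (n : ℕ) (a d b : ℝ)
    (hb : 0 < b)
    (α : Fin n → ℝ) (hα : ∀ j, α j ∈ Set.Ico (0 : ℝ) π)
    (u v : Fin n → ℂ)
    (hu : ∀ j, ‖u j - (a : ℂ)‖ ≤ d)
    (hv : ∀ j, ‖v j - (a : ℂ)‖ ≤ d)
    (w : ℂ)
    (hw : w = ∑ j, u j / (1 + (b : ℂ) * Complex.exp (Complex.I * (α j : ℂ)))
            + ∑ j, v j / (1 + (b : ℂ)⁻¹ * Complex.exp (-(Complex.I * (α j : ℂ))))) :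
    a * n - d * ∑ j, 1 / Real.cos (α j / 2) ≤ w.re ∧
      w.re ≤ a * n + d * ∑ j, 1 / Real.cos (α j / 2) := by
  have hcos (j : Fin n) : 0 < Real.cos (α j / 2) := by
    obtain ⟨hα₀, hαπ⟩ := hα j
    exact Real.cos_pos_of_mem_Ioo ⟨by linarith [Real.pi_pos], by linarith⟩
  have hdist : ‖w - a * n‖ ≤ d * ∑ j, 1 / Real.cos (α j / 2) := by
    calc ‖w - a * n‖
        = ‖∑ j, (u j / (1 + (b : ℂ) * Complex.exp (Complex.I * (α j : ℂ)))
            + v j / (1 + (b : ℂ)⁻¹ * Complex.exp (-(Complex.I * (α j : ℂ)))) - a)‖ := by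
          rw [hw, sum_sub_distrib, sum_add_distrib, sum_const, card_univ, Fintype.card_fin,
            nsmul_eq_mul, mul_comm (n : ℂ)]
      _ ≤ ∑ j, d * (1 / Real.cos (α j / 2)) := (norm_sum_le _ _).trans <|
          sum_le_sum fun j _ => norm_div_add_div_sub_le_mul_sec hb (hcos j) (hu j) (hv j)
      _ = d * ∑ j, 1 / Real.cos (α j / 2) := (mul_sum _ _ _).symm
  have hre : |w.re - a * n| ≤ d * ∑ j, 1 / Real.cos (α j / 2) := by
    simpa using (Complex.abs_re_le_norm _).trans hdist
  exact ⟨by linarith [(abs_le.mp hre).1], by linarith [(abs_le.mp hre).2]⟩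

/-- the main combination lemma: if `|u j - a| ≤ d`, `|v j - a| ≤ d`,
and `w = ∑ u j / (1 + b e^{iα j}) + ∑ v j / (1 + b⁻¹ e^{-iα j})`, then
`a n - d ∑ sec (α j / 2) ≤ Re w ≤ a n + d ∑ sec (α j / 2)`. -/
theorem stmt_0 (n : ℕ) (hn : 1 ≤ n) (a d b : ℝ)
    (had : a > d) (hd : 0 ≤ d) (hb : 0 < b)
    (α : Fin n → ℝ) (hα : ∀ j, α j ∈ Set.Ico (0 : ℝ) π)
    (u v : Fin n → ℂ)
    (hu : ∀ j, ‖u j - (a : ℂ)‖ ≤ d)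
    (hv : ∀ j, ‖v j - (a : ℂ)‖ ≤ d)
    (w : ℂ)
    (hw : w = ∑ j, u j / (1 + (b : ℂ) * Complex.exp (Complex.I * (α j : ℂ)))
            + ∑ j, v j / (1 + (b : ℂ)⁻¹ * Complex.exp (-(Complex.I * (α j : ℂ))))) :
    a * n - d * ∑ j, 1 / Real.cos (α j / 2) ≤ w.re ∧
      w.re ≤ a * n + d * ∑ j, 1 / Real.cos (α j / 2) :=
  stmt_0_general n a d b hb α hα u v hu hv w hw
end

section
/- Let ρ ∈ (0, 1], let n ≥ 1, let b ∈ (0,∞), let α_1, …, α_n ∈ [0, π), and set S = Σ_{j=1}^n sec(α_j/2) (note S ≥ n). Let f_1, …, f_n and g_1, …, g_n be analytic on the disk {z : |z| < ρ} with f_j′(0) = 1 = g_j′(0) and Re f_j′(z) > 0 and Re g_j′(z) > 0 for all |z| < ρ and all j. Define F = Σ_{j=1}^n f_j/(1 + b e^{iα_j}) + Σ_{j=1}^n g_j/(1 + b^{-1} e^{-iα_j}). Then Re F′(z) > 0 for all |z| < R, and consequently F is injective on the open disk {z : |z| < R}, where R = (ρ/n) ( S − √(S² − n²) ). -/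
/-!
Each `f_j'` (and `g_j'`) has positive real part and equals `1` at the origin, so Schwarz's lemma,
applied to its Cayley transform `(p - 1) / (p + 1)`, puts `f_j'(z)` for `|z| = rρ` in the closed
disk with center `(1 + r²) / (1 - r²)` and radius `2r / (1 - r²)`. The weights
`c = 1 / (1 + b e^{iα})` and `c' = 1 / (1 + b⁻¹ e^{-iα})` satisfy `c + c' = 1` and
`|c| + |c'| = (1 + b) / |1 + b e^{iα}| ≤ sec (α / 2)`, whence
`(1 - r²) Re F'(z) ≥ n (1 + r²) - 2 r S`, which is positive as long as `r` stays below the smaller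
root `(S - √(S² - n²)) / n`. Injectivity on the convex disk is the Noshiro–Warschawski argument:
`Re (F / (z₂ - z₁))` is strictly increasing along the segment from `z₁` to `z₂`.
-/

open Real Finset Metric Set

theorem Convex.injOn_of_re_deriv_pos {U : Set ℂ} {F : ℂ → ℂ} (hU : Convex ℝ U)
    (hF : ∀ z ∈ U, DifferentiableAt ℂ F z) (hre : ∀ z ∈ U, 0 < (deriv F z).re) :
    InjOn F U := by
  intro z₁ h₁ z₂ h₂ hEq
  by_contra hne
  have hw : z₂ - z₁ ≠ 0 := sub_ne_zero.2 (Ne.symm hne)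
  have hseg : ∀ s ∈ Icc (0 : ℝ) 1, z₁ + s * (z₂ - z₁) ∈ U := fun s hs => by
    simpa [Complex.real_smul] using hU.add_smul_sub_mem h₁ h₂ hs
  have hφ : ∀ s ∈ Icc (0 : ℝ) 1, HasDerivAt (fun s : ℝ => (F (z₁ + s * (z₂ - z₁)) / (z₂ - z₁)).re)
      (deriv F (z₁ + s * (z₂ - z₁))).re s := fun s hs => by
    have hline : HasDerivAt (fun u : ℂ => z₁ + u * (z₂ - z₁)) (z₂ - z₁) s := by
      simpa using ((hasDerivAt_id (s : ℂ)).mul_const (z₂ - z₁)).const_add z₁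
    have := ((hF _ (hseg s hs)).hasDerivAt.comp (s : ℂ) hline).div_const (z₂ - z₁)
    rw [mul_div_cancel_right₀ _ hw] at this
    exact this.real_of_complex
  have hmono := strictMonoOn_of_deriv_pos (convex_Icc 0 1)
    (fun s hs => (hφ s hs).continuousAt.continuousWithinAt) fun s hs => by
      rw [interior_Icc] at hs
      rw [(hφ s (Ioo_subset_Icc_self hs)).deriv]
      exact hre _ (hseg s (Ioo_subset_Icc_self hs))
  have := hmono (left_mem_Icc.2 zero_le_one) (right_mem_Icc.2 zero_le_one) zero_lt_one
  simp [hEq] at this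

theorem norm_sub_one_div_add_one_lt_one {w : ℂ} (hw : 0 < w.re) : ‖(w - 1) / (w + 1)‖ < 1 := by
  have hw1 : w + 1 ≠ 0 := fun h => by
    have := congrArg Complex.re h
    simp only [Complex.add_re, Complex.one_re, Complex.zero_re] at this
    linarith
  rw [norm_div, div_lt_one (norm_pos_iff.2 hw1), ← sq_lt_sq₀ (norm_nonneg _) (norm_nonneg _),
    Complex.sq_norm, Complex.sq_norm, Complex.normSq_apply, Complex.normSq_apply]
  simp only [Complex.sub_re, Complex.sub_im, Complex.add_re, Complex.add_im, Complex.one_re,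
    Complex.one_im]
  nlinarith

theorem one_add_div_one_sub_mem_closedBall {Q : ℂ} {r : ℝ} (hQ : ‖Q‖ ≤ r) (hr : r < 1) :
    (1 + Q) / (1 - Q) ∈ closedBall (((1 + r ^ 2) / (1 - r ^ 2) : ℝ) : ℂ) (2 * r / (1 - r ^ 2)) := by
  have hr0 : 0 ≤ r := (norm_nonneg Q).trans hQ
  have hr2 : 0 < 1 - r ^ 2 := by nlinarith
  have hQ1 : 1 - Q ≠ 0 := fun h => by
    rw [← sub_eq_zero.1 h, norm_one] at hQ; linarith
  -- After squaring, `‖Q - r²‖ ≤ r ‖1 - Q‖` reads `(1 - r²) (r² - ‖Q‖²) ≥ 0`.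
  have hkey : ‖Q - (r : ℂ) ^ 2‖ ≤ r * ‖1 - Q‖ := by
    have hQ2 : Q.re * Q.re + Q.im * Q.im ≤ r ^ 2 := by
      rw [← Complex.normSq_apply, ← Complex.sq_norm]; gcongr
    rw [← sq_le_sq₀ (norm_nonneg _) (by positivity), mul_pow, Complex.sq_norm, Complex.sq_norm,
      Complex.normSq_apply, Complex.normSq_apply]
    simp only [← Complex.ofReal_pow, Complex.sub_re, Complex.sub_im, Complex.one_re,
      Complex.one_im, Complex.ofReal_re, Complex.ofReal_im]
    nlinarith [mul_nonneg hr2.le (sub_nonneg.2 hQ2)]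
  have hid : (1 + Q) / (1 - Q) - (((1 + r ^ 2) / (1 - r ^ 2) : ℝ) : ℂ)
      = 2 * (Q - (r : ℂ) ^ 2) / ((1 - Q) * ((1 - r ^ 2 : ℝ) : ℂ)) := by
    have : ((1 - r ^ 2 : ℝ) : ℂ) ≠ 0 := Complex.ofReal_ne_zero.2 hr2.ne'
    push_cast at this ⊢
    field_simp
    ring
  rw [mem_closedBall, dist_eq_norm, hid, norm_div, norm_mul, norm_mul, Complex.norm_real,
    Real.norm_of_nonneg hr2.le, div_le_div_iff₀ (by positivity) hr2]
  rw [Complex.norm_two]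
  nlinarith [mul_le_mul_of_nonneg_right hkey hr2.le]

theorem apply_mem_closedBall_of_re_pos {ρ : ℝ} {p : ℂ → ℂ} (hp : DifferentiableOn ℂ p (ball 0 ρ))
    (hp0 : p 0 = 1) (hre : ∀ w ∈ ball (0 : ℂ) ρ, 0 < (p w).re) {z : ℂ} (hz : z ∈ ball 0 ρ) :
    p z ∈ closedBall (((1 + (‖z‖ / ρ) ^ 2) / (1 - (‖z‖ / ρ) ^ 2) : ℝ) : ℂ)
      (2 * (‖z‖ / ρ) / (1 - (‖z‖ / ρ) ^ 2)) := by
  have hρ : 0 < ρ := pos_of_mem_ball hz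
  have hne : ∀ w ∈ ball (0 : ℂ) ρ, p w + 1 ≠ 0 := fun w hw h => by
    have := congrArg Complex.re h
    simp only [Complex.add_re, Complex.one_re, Complex.zero_re] at this
    linarith [hre w hw]
  set q : ℂ → ℂ := fun w => (p w - 1) / (p w + 1)
  have hq0 : q 0 = 0 := by simp [q, hp0]
  have hmaps : MapsTo q (ball 0 ρ) (closedBall (q 0) 1) := fun w hw => by
    rw [hq0, mem_closedBall_zero_iff]
    exact (norm_sub_one_div_add_one_lt_one (hre w hw)).le
  have hqz : ‖q z‖ ≤ ‖z‖ / ρ := by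
    have hq : DifferentiableOn ℂ q (ball 0 ρ) := (hp.sub_const 1).div (hp.add_const 1) hne
    have := Complex.dist_le_div_mul_dist_of_mapsTo_ball hq hmaps hz
    rwa [hq0, dist_zero_right, dist_zero_right, one_div_mul_eq_div] at this
  have hpq : p z = (1 + q z) / (1 - q z) := by
    have := hne z hz
    simp only [q]
    field_simp
    ring
  rw [hpq]
  exact one_add_div_one_sub_mem_closedBall hqz ((div_lt_one hρ).2 (mem_ball_zero_iff.1 hz))

theorem sub_le_re_mul_of_mem_closedBall {c P : ℂ} {C E : ℝ} (hP : P ∈ closedBall (C : ℂ) E) :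
    c.re * C - ‖c‖ * E ≤ (c * P).re := by
  have h : ‖c * (P - C)‖ ≤ ‖c‖ * E := by
    rw [norm_mul]; exact mul_le_mul_of_nonneg_left (mem_closedBall_iff_norm.1 hP) (norm_nonneg c)
  have : (c * P).re = c.re * C + (c * (P - C)).re := by simp [mul_sub]
  linarith [neg_abs_le (c * (P - C)).re, Complex.abs_re_le_norm (c * (P - C))]

theorem sub_mul_le_re_div_one_add_add_div_one_add {x y P Q : ℂ} {C E s : ℝ} (hxy : x * y = 1)
    (hs : 1 + ‖x‖ ≤ s * ‖1 + x‖) (hP : P ∈ closedBall (C : ℂ) E) (hQ : Q ∈ closedBall (C : ℂ) E) :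
    C - E * s ≤ (P / (1 + x) + Q / (1 + y)).re := by
  have hE : 0 ≤ E := nonempty_closedBall.1 ⟨P, hP⟩
  have hx1 : 1 + x ≠ 0 := fun h => by
    rw [h, norm_zero, mul_zero] at hs; linarith [norm_nonneg x]
  have hy : (1 + y)⁻¹ = x * (1 + x)⁻¹ := by
    have hy1 : 1 + y ≠ 0 := fun h => hx1 (by linear_combination x * h - hxy)
    field_simp
    linear_combination -hxy
  have hre : ((1 + x)⁻¹).re * C + ((1 + y)⁻¹).re * C = C := by
    rw [← add_mul, ← Complex.add_re, hy, ← one_add_mul, mul_inv_cancel₀ hx1, Complex.one_re,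
      one_mul]
  have hnorm : ‖(1 + x)⁻¹‖ + ‖(1 + y)⁻¹‖ ≤ s := by
    rw [hy, norm_mul, ← one_add_mul, norm_inv, ← div_eq_mul_inv, div_le_iff₀ (norm_pos_iff.2 hx1)]
    exact hs
  have h₁ := sub_le_re_mul_of_mem_closedBall (c := (1 + x)⁻¹) hP
  have h₂ := sub_le_re_mul_of_mem_closedBall (c := (1 + y)⁻¹) hQ
  rw [div_eq_inv_mul, div_eq_inv_mul, Complex.add_re]
  nlinarith [mul_le_mul_of_nonneg_left hnorm hE]

theorem card_mul_sub_le_re_sum {ι : Type*} [Fintype ι] {x y P Q : ι → ℂ} {s : ι → ℝ} {C E : ℝ}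
    (hxy : ∀ j, x j * y j = 1) (hs : ∀ j, 1 + ‖x j‖ ≤ s j * ‖1 + x j‖)
    (hP : ∀ j, P j ∈ closedBall (C : ℂ) E) (hQ : ∀ j, Q j ∈ closedBall (C : ℂ) E) :
    Fintype.card ι * C - E * ∑ j, s j ≤ (∑ j, P j / (1 + x j) + ∑ j, Q j / (1 + y j)).re := by
  rw [← Finset.sum_add_distrib, Complex.re_sum, Finset.mul_sum, ← nsmul_eq_mul, ← Finset.card_univ,
    ← Finset.sum_const, ← Finset.sum_sub_distrib]
  exact Finset.sum_le_sum fun j _ =>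
    sub_mul_le_re_div_one_add_add_div_one_add (hxy j) (hs j) (hP j) (hQ j)

theorem one_add_norm_le_mul_norm_one_add_mul_exp {a b : ℝ} (hb : 0 ≤ b) (ha : 0 < cos (a / 2)) :
    1 + ‖(b : ℂ) * Complex.exp (Complex.I * a)‖ ≤
      1 / cos (a / 2) * ‖1 + b * Complex.exp (Complex.I * a)‖ := by
  have hexp : Complex.exp (Complex.I * a) = cos a + sin a * Complex.I := by
    rw [mul_comm, Complex.exp_mul_I, ← Complex.ofReal_cos, ← Complex.ofReal_sin]
  -- `‖1 + b e^{ia}‖² - (1 + b)² cos² (a/2) = (1 - b)² sin² (a/2)`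
  have hsq : (cos (a / 2) * (1 + b)) ^ 2 ≤ ‖1 + b * Complex.exp (Complex.I * a)‖ ^ 2 := by
    rw [Complex.sq_norm, Complex.normSq_apply, hexp]
    simp only [Complex.add_re, Complex.add_im, Complex.mul_re, Complex.mul_im, Complex.ofReal_re,
      Complex.ofReal_im, Complex.one_re, Complex.one_im, Complex.I_re, Complex.I_im]
    have h2 : cos a = 2 * cos (a / 2) ^ 2 - 1 := by rw [← cos_two_mul]; ring_nf
    nlinarith [sin_sq_add_cos_sq a, sq_nonneg (1 - b), cos_sq_le_one (a / 2)]
  rw [norm_mul, Complex.norm_real, Complex.norm_exp_I_mul_ofReal, norm_of_nonneg hb, mul_one,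
    div_mul_eq_mul_div, one_mul, le_div_iff₀ ha, mul_comm]
  exact (sq_le_sq₀ (by positivity) (norm_nonneg _)).1 hsq

theorem sub_sqrt_sq_sub_sq_le {n S : ℝ} (hn : 0 ≤ n) (hnS : n ≤ S) : S - √(S ^ 2 - n ^ 2) ≤ n := by
  have : S - n ≤ √(S ^ 2 - n ^ 2) := le_sqrt_of_sq_le (by nlinarith)
  linarith

theorem two_mul_mul_lt_mul_one_add_sq {n S r : ℝ} (hn : 0 < n) (hnS : n ≤ S)
    (hr : n * r < S - √(S ^ 2 - n ^ 2)) : 2 * r * S < n * (1 + r ^ 2) := by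
  have ht0 := sqrt_nonneg (S ^ 2 - n ^ 2)
  set t := √(S ^ 2 - n ^ 2)
  have ht : t ^ 2 = S ^ 2 - n ^ 2 := sq_sqrt (by nlinarith)
  -- `n (n r² - 2 S r + n) = (n r - S + t) (n r - S - t)`
  nlinarith [mul_pos (by linarith : 0 < S - t - n * r) (by linarith : 0 < S + t - n * r)]

theorem re_deriv_sum_div_add_sum_div_pos {ι : Type*} [Fintype ι] {ρ : ℝ} {f g : ι → ℂ → ℂ}
    {x y : ι → ℂ} {s : ι → ℝ} {z : ℂ} (hf : ∀ j, DifferentiableOn ℂ (f j) (ball 0 ρ))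
    (hg : ∀ j, DifferentiableOn ℂ (g j) (ball 0 ρ))
    (hf0 : ∀ j, deriv (f j) 0 = 1) (hg0 : ∀ j, deriv (g j) 0 = 1)
    (hfre : ∀ j, ∀ w ∈ ball (0 : ℂ) ρ, 0 < (deriv (f j) w).re)
    (hgre : ∀ j, ∀ w ∈ ball (0 : ℂ) ρ, 0 < (deriv (g j) w).re)
    (hxy : ∀ j, x j * y j = 1) (hs : ∀ j, 1 + ‖x j‖ ≤ s j * ‖1 + x j‖) (hz : z ∈ ball 0 ρ)
    (hr : 2 * (‖z‖ / ρ) * ∑ j, s j < Fintype.card ι * (1 + (‖z‖ / ρ) ^ 2)) :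
    0 < (deriv (fun w => ∑ j, f j w / (1 + x j) + ∑ j, g j w / (1 + y j)) z).re := by
  have hderiv : HasDerivAt (fun w => ∑ j, f j w / (1 + x j) + ∑ j, g j w / (1 + y j))
      (∑ j, deriv (f j) z / (1 + x j) + ∑ j, deriv (g j) z / (1 + y j)) z :=
    (HasDerivAt.fun_sum fun j _ =>
        ((hf j).differentiableAt (isOpen_ball.mem_nhds hz)).hasDerivAt.div_const _).add
      (HasDerivAt.fun_sum fun j _ =>
        ((hg j).differentiableAt (isOpen_ball.mem_nhds hz)).hasDerivAt.div_const _)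
  have hP := fun j => apply_mem_closedBall_of_re_pos
    ((hf j).analyticOnNhd isOpen_ball).deriv.differentiableOn (hf0 j) (hfre j) hz
  have hQ := fun j => apply_mem_closedBall_of_re_pos
    ((hg j).analyticOnNhd isOpen_ball).deriv.differentiableOn (hg0 j) (hgre j) hz
  rw [hderiv.deriv]
  refine lt_of_lt_of_le ?_ (card_mul_sub_le_re_sum hxy hs hP hQ)
  have hr1 : ‖z‖ / ρ < 1 := (div_lt_one (pos_of_mem_ball hz)).2 (mem_ball_zero_iff.1 hz)
  have h1r : 0 < 1 - (‖z‖ / ρ) ^ 2 := by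
    nlinarith [div_nonneg (norm_nonneg z) (pos_of_mem_ball hz).le]
  rw [mul_div_assoc', div_mul_eq_mul_div, ← sub_div]
  exact div_pos (by linarith) h1r

/-- radius of univalence for general combinations of functions whose
derivatives have positive real part on `{|z| < ρ}` and equal `1` at the origin. -/
theorem stmt_7 (ρ : ℝ) (hρ : ρ ∈ Set.Ioc (0 : ℝ) 1) (n : ℕ) (hn : 1 ≤ n)
    (b : ℝ) (hb : 0 < b)
    (α : Fin n → ℝ) (hα : ∀ j, α j ∈ Set.Ico (0 : ℝ) π)
    (S : ℝ) (hS : S = ∑ j, 1 / Real.cos (α j / 2))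
    (f g : Fin n → ℂ → ℂ)
    (hf : ∀ j, DifferentiableOn ℂ (f j) (Metric.ball 0 ρ))
    (hg : ∀ j, DifferentiableOn ℂ (g j) (Metric.ball 0 ρ))
    (hf0 : ∀ j, deriv (f j) 0 = 1) (hg0 : ∀ j, deriv (g j) 0 = 1)
    (hfre : ∀ j, ∀ z ∈ Metric.ball (0 : ℂ) ρ, 0 < (deriv (f j) z).re)
    (hgre : ∀ j, ∀ z ∈ Metric.ball (0 : ℂ) ρ, 0 < (deriv (g j) z).re)
    (F : ℂ → ℂ)
    (hF : F = fun z => ∑ j, f j z / (1 + (b : ℂ) * Complex.exp (Complex.I * (α j : ℂ)))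
            + ∑ j, g j z / (1 + (b : ℂ)⁻¹ * Complex.exp (-(Complex.I * (α j : ℂ)))))
    (R : ℝ) (hR : R = (ρ / n) * (S - Real.sqrt (S ^ 2 - n ^ 2))) :
    (∀ z : ℂ, ‖z‖ < R → 0 < (deriv F z).re) ∧
      Set.InjOn F (Metric.ball 0 R) := by
  have hn0 : (0 : ℝ) < n := by exact_mod_cast hn
  have hcos : ∀ j, 0 < cos (α j / 2) := fun j =>
    cos_pos_of_mem_Ioo ⟨by linarith [pi_pos, (hα j).1], by linarith [(hα j).2]⟩
  have hnS : (n : ℝ) ≤ S := by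
    simpa [hS] using card_nsmul_le_sum univ _ 1 fun j _ => one_le_one_div (hcos j) (cos_le_one _)
  have hRρ : R ≤ ρ := by
    rw [hR, div_mul_comm]
    exact mul_le_of_le_one_left hρ.1.le ((div_le_one hn0).2 (sub_sqrt_sq_sub_sq_le hn0.le hnS))
  have hxy : ∀ j, (b : ℂ) * Complex.exp (Complex.I * α j) *
      ((b : ℂ)⁻¹ * Complex.exp (-(Complex.I * α j))) = 1 := fun j => by
    have : (b : ℂ) ≠ 0 := Complex.ofReal_ne_zero.2 hb.ne'
    rw [Complex.exp_neg]
    field_simp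
  have hpos : ∀ z : ℂ, ‖z‖ < R → 0 < (deriv F z).re := fun z hzR => by
    have hz : z ∈ ball (0 : ℂ) ρ := mem_ball_zero_iff.2 (hzR.trans_le hRρ)
    rw [hR, div_mul_comm, ← div_lt_iff₀ hρ.1, lt_div_iff₀' hn0] at hzR
    subst hF
    refine re_deriv_sum_div_add_sum_div_pos hf hg hf0 hg0 hfre hgre hxy
      (fun j => one_add_norm_le_mul_norm_one_add_mul_exp hb.le (hcos j)) hz ?_
    rw [Fintype.card_fin, ← hS]
    exact two_mul_mul_lt_mul_one_add_sq hn0 hnS hzR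
  have hFd : DifferentiableOn ℂ F (ball 0 ρ) := by subst hF; fun_prop
  exact ⟨hpos, (convex_ball 0 R).injOn_of_re_deriv_pos
    (fun z hz => hFd.differentiableAt (isOpen_ball.mem_nhds (ball_subset_ball hRρ hz)))
    fun z hz => hpos z (mem_ball_zero_iff.1 hz)⟩
end

section
/- Let ρ ∈ (0, 1], let n ≥ 1, let b ∈ (0,∞), let α_1, …, α_n ∈ [0, π), and set S = Σ_{j=1}^n sec(α_j/2). Let f_1, …, f_n and g_1, …, g_n be analytic on the disk {z : |z| < ρ} with f_j′(0) = 1 = g_j′(0) and Re f_j′(z) > 0 and Re g_j′(z) > 0 for all |z| < ρ and all j, and define F = Σ_{j=1}^n f_j/(1 + b e^{iα_j}) + Σ_{j=1}^n g_j/(1 + b^{-1} e^{-iα_j}). Then for every z with |z| = r < ρ, Re F′(z) ≥ (n r² − 2 r ρ S + n ρ²)/(ρ² − r²). -/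
/-
Each `f_j'` and `g_j'` is a Carathéodory function on the disc of radius `ρ`: composing with the
Cayley map `w ↦ (1 - w)/(1 + w)` gives a self-map of the unit disc fixing `0`, so by Schwarz's
lemma its value at `z` has modulus at most `r/ρ`, and undoing the Cayley map places `f_j'(z)` and
`g_j'(z)` in the disc with centre `A = (ρ² + r²)/(ρ² - r²)` and radius `B = 2rρ/(ρ² - r²)`.
With `x = b e^{iα}` the two coefficients `1/(1 + x)` and `1/(1 + x⁻¹)` add up to `1`, and their
moduli add up to `(1 + b)/|1 + x| ≤ sec(α/2)` because `Re (e^{-iα/2}(1 + x)) = (1 + b) cos(α/2)`.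
Hence each pair of terms of `Re F'(z)` is at least `A - B sec(α_j/2)`; summing over `j` gives the
bound.
-/

open Real Finset Metric

section InvOneAdd

variable {K : Type*} [Field K] {x : K}

theorem inv_one_add_inv (hx : x ≠ 0) : (1 + x⁻¹)⁻¹ = x / (1 + x) := by
  rw [inv_eq_iff_eq_inv, inv_div, add_div, div_self hx, one_div, add_comm]

theorem inv_one_add_add_inv_one_add_inv (hx : x ≠ 0) (hx1 : 1 + x ≠ 0) :
    (1 + x)⁻¹ + (1 + x⁻¹)⁻¹ = 1 := by
  rw [inv_one_add_inv hx, inv_eq_one_div, ← add_div, div_self hx1]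

end InvOneAdd

theorem norm_inv_one_add_add_norm_inv_one_add_inv {K : Type*} [NormedField K] {x : K}
    (hx : x ≠ 0) : ‖(1 + x)⁻¹‖ + ‖(1 + x⁻¹)⁻¹‖ = (1 + ‖x‖) / ‖1 + x‖ := by
  rw [inv_one_add_inv hx, norm_inv, norm_div, inv_eq_one_div, ← add_div]

namespace Complex

theorem sub_mul_le_re_mul_add_re_mul {u v c d : ℂ} {A B s : ℝ} (hu : ‖u - A‖ ≤ B)
    (hv : ‖v - A‖ ≤ B) (hcd : c + d = 1) (hs : ‖c‖ + ‖d‖ ≤ s) :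
    A - B * s ≤ (u * c).re + (v * d).re := by
  have hsplit : u * c + v * d = A + ((u - A) * c + (v - A) * d) := by
    linear_combination (A : ℂ) * hcd
  have hre : (u * c).re + (v * d).re = A + ((u - A) * c).re + ((v - A) * d).re := by
    simpa only [add_re, ofReal_re, add_assoc] using congrArg re hsplit
  have hlow : ∀ w e : ℂ, ‖w‖ ≤ B → -(B * ‖e‖) ≤ (w * e).re := fun w e hw =>
    calc -(B * ‖e‖) ≤ -‖w * e‖ := by rw [norm_mul]; gcongr
      _ ≤ (w * e).re := neg_le_of_abs_le (abs_re_le_norm _)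
  have hBs : B * (‖c‖ + ‖d‖) ≤ B * s :=
    mul_le_mul_of_nonneg_left hs ((norm_nonneg _).trans hu)
  linarith [hlow _ c hu, hlow _ d hv]

theorem norm_one_sub_div_one_add_lt_one {w : ℂ} (hw : 0 < w.re) :
    ‖(1 - w) / (1 + w)‖ < 1 := by
  have hpos : 0 < ‖1 + w‖ := by
    have := re_le_norm (1 + w)
    simp only [add_re, one_re] at this
    linarith
  rw [norm_div, div_lt_one hpos]
  refine lt_of_pow_lt_pow_left₀ 2 (norm_nonneg _) ?_
  rw [Complex.sq_norm, Complex.sq_norm, normSq_apply, normSq_apply]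
  simp only [sub_re, sub_im, add_re, add_im, one_re, one_im]
  nlinarith

theorem one_sub_div_one_add_involutive {w : ℂ} (hw : 1 + w ≠ 0) :
    (1 - (1 - w) / (1 + w)) / (1 + (1 - w) / (1 + w)) = w := by
  field_simp
  ring

theorem norm_one_sub_div_one_add_sub_le {q : ℂ} {r ρ : ℝ} (hr : 0 ≤ r) (hrρ : r < ρ)
    (hq : ρ * ‖q‖ ≤ r) :
    ‖(1 - q) / (1 + q) - ((ρ ^ 2 + r ^ 2) / (ρ ^ 2 - r ^ 2) : ℝ)‖
      ≤ 2 * r * ρ / (ρ ^ 2 - r ^ 2) := by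
  have hρ : 0 < ρ := hr.trans_lt hrρ
  have hD : 0 < ρ ^ 2 - r ^ 2 := by nlinarith
  have hq1 : 1 + q ≠ 0 := fun h => by
    rw [eq_neg_of_add_eq_zero_right h, norm_neg, norm_one] at hq
    linarith
  have hid : (1 - q) / (1 + q) - ((ρ ^ 2 + r ^ 2) / (ρ ^ 2 - r ^ 2) : ℝ)
      = -2 * (ρ ^ 2 * q + r ^ 2) / ((1 + q) * (ρ ^ 2 - r ^ 2 : ℝ)) := by
    have : ((ρ ^ 2 - r ^ 2 : ℝ) : ℂ) ≠ 0 := ofReal_ne_zero.2 hD.ne'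
    push_cast at *
    field_simp
    ring
  -- `(rρ‖1 + q‖)² - ‖ρ²q + r²‖² = (ρ² - r²)(r² - ρ²‖q‖²)`
  have hkey : ‖ρ ^ 2 * q + r ^ 2‖ ≤ r * ρ * ‖1 + q‖ := by
    refine le_of_pow_le_pow_left₀ two_ne_zero (by positivity) ?_
    have hq2 : ρ ^ 2 * (q.re ^ 2 + q.im ^ 2) ≤ r ^ 2 := by
      have h := pow_le_pow_left₀ (by positivity) hq 2
      rwa [mul_pow, Complex.sq_norm, normSq_apply, ← sq, ← sq] at h
    rw [mul_pow, Complex.sq_norm, Complex.sq_norm, normSq_apply, normSq_apply]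
    simp only [add_re, add_im, mul_re, mul_im, one_re, one_im, ← ofReal_pow, ofReal_re, ofReal_im]
    nlinarith [mul_nonneg hD.le (sub_nonneg.2 hq2)]
  rw [hid, norm_div, norm_mul, norm_mul, norm_real, norm_neg, RCLike.norm_two,
    Real.norm_of_nonneg hD.le,
    div_le_div_iff₀ (mul_pos (norm_pos_iff.2 hq1) hD) hD]
  nlinarith

theorem norm_sub_le_of_re_pos {φ : ℂ → ℂ} {ρ : ℝ} (hd : DifferentiableOn ℂ φ (ball 0 ρ))
    (h0 : φ 0 = 1) (hre : ∀ w ∈ ball (0 : ℂ) ρ, 0 < (φ w).re) {z : ℂ} (hz : ‖z‖ < ρ) :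
    ‖φ z - ((ρ ^ 2 + ‖z‖ ^ 2) / (ρ ^ 2 - ‖z‖ ^ 2) : ℝ)‖ ≤ 2 * ‖z‖ * ρ / (ρ ^ 2 - ‖z‖ ^ 2) := by
  have hz' : z ∈ ball (0 : ℂ) ρ := mem_ball_zero_iff.2 hz
  have hne : ∀ w ∈ ball (0 : ℂ) ρ, 1 + φ w ≠ 0 := fun w hw h => by
    have := congrArg re h
    simp only [add_re, one_re, zero_re] at this
    linarith [hre w hw]
  set ψ : ℂ → ℂ := fun w => (1 - φ w) / (1 + φ w)
  have hψ0 : ψ 0 = 0 := by simp [ψ, h0]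
  have hmaps : Set.MapsTo ψ (ball 0 ρ) (closedBall (ψ 0) 1) := fun w hw => by
    rw [hψ0, mem_closedBall_zero_iff]
    exact (norm_one_sub_div_one_add_lt_one (hre w hw)).le
  have hschwarz : ρ * ‖ψ z‖ ≤ ‖z‖ := by
    have hψd : DifferentiableOn ℂ ψ (ball 0 ρ) :=
      ((differentiableOn_const 1).sub hd).div ((differentiableOn_const 1).add hd) hne
    have := dist_le_div_mul_dist_of_mapsTo_ball hψd hmaps hz'
    rw [hψ0, dist_zero_right, dist_zero_right, one_div_mul_eq_div,
      le_div_iff₀ ((norm_nonneg z).trans_lt hz)] at this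
    linarith
  rw [← one_sub_div_one_add_involutive (hne z hz')]
  exact norm_one_sub_div_one_add_sub_le (norm_nonneg z) hz hschwarz

theorem mul_cos_half_le_norm_one_add_mul_exp (b α : ℝ) :
    (1 + b) * Real.cos (α / 2) ≤ ‖1 + b * exp (I * α)‖ := by
  have hfactor : 1 + b * exp (I * α)
      = exp (↑(α / 2) * I) * (exp (↑(-(α / 2)) * I) + b * exp (↑(α / 2) * I)) := by
    rw [mul_add, ← exp_add, ← mul_left_comm, ← exp_add]
    push_cast
    ring_nf
    rw [exp_zero, add_comm]
  rw [hfactor, norm_mul, norm_exp_ofReal_mul_I, one_mul]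
  refine le_trans (le_of_eq ?_) (re_le_norm _)
  simp only [add_re, re_ofReal_mul, exp_ofReal_mul_I_re, Real.cos_neg]
  ring

theorem norm_inv_one_add_mul_exp_add_le {b α : ℝ} (hb : 0 < b) (hα : 0 < Real.cos (α / 2)) :
    ‖(1 + b * exp (I * α))⁻¹‖ + ‖(1 + (b * exp (I * α))⁻¹)⁻¹‖ ≤ 1 / Real.cos (α / 2) := by
  have hx : (b : ℂ) * exp (I * α) ≠ 0 := mul_ne_zero (ofReal_ne_zero.2 hb.ne') (exp_ne_zero _)
  have hlow := mul_cos_half_le_norm_one_add_mul_exp b α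
  have hpos : 0 < (1 + b) * Real.cos (α / 2) := by positivity
  rw [norm_inv_one_add_add_norm_inv_one_add_inv hx, norm_mul, norm_real, norm_exp_I_mul_ofReal,
    mul_one, Real.norm_of_nonneg hb.le, div_le_div_iff₀ (hpos.trans_le hlow) hα]
  linarith

end Complex

theorem stmt_8_general (ρ : ℝ) (n : ℕ)
    (b : ℝ) (hb : 0 < b)
    (α : Fin n → ℝ) (hα : ∀ j, α j ∈ Set.Ico (0 : ℝ) π)
    (S : ℝ) (hS : S = ∑ j, 1 / Real.cos (α j / 2))
    (f g : Fin n → ℂ → ℂ)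
    (hf : ∀ j, DifferentiableOn ℂ (f j) (Metric.ball 0 ρ))
    (hg : ∀ j, DifferentiableOn ℂ (g j) (Metric.ball 0 ρ))
    (hf0 : ∀ j, deriv (f j) 0 = 1) (hg0 : ∀ j, deriv (g j) 0 = 1)
    (hfre : ∀ j, ∀ z ∈ Metric.ball (0 : ℂ) ρ, 0 < (deriv (f j) z).re)
    (hgre : ∀ j, ∀ z ∈ Metric.ball (0 : ℂ) ρ, 0 < (deriv (g j) z).re)
    (F : ℂ → ℂ)
    (hF : F = fun z => ∑ j, f j z / (1 + (b : ℂ) * Complex.exp (Complex.I * (α j : ℂ)))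
            + ∑ j, g j z / (1 + (b : ℂ)⁻¹ * Complex.exp (-(Complex.I * (α j : ℂ))))) :
    ∀ z : ℂ, ∀ r : ℝ, r = ‖z‖ → r < ρ →
      (n * r ^ 2 - 2 * r * ρ * S + n * ρ ^ 2) / (ρ ^ 2 - r ^ 2) ≤ (deriv F z).re := by
  intro z r hr hrρ
  subst hr
  have hz : z ∈ ball (0 : ℂ) ρ := mem_ball_zero_iff.2 hrρ
  set x : Fin n → ℂ := fun j => b * Complex.exp (Complex.I * α j) with hx_def
  have hx : ∀ j, x j ≠ 0 := fun j =>
    mul_ne_zero (Complex.ofReal_ne_zero.2 hb.ne') (Complex.exp_ne_zero _)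
  have hcos : ∀ j, 0 < Real.cos (α j / 2) := fun j =>
    cos_pos_of_mem_Ioo ⟨by linarith [(hα j).1, pi_pos], by linarith [(hα j).2]⟩
  have hx1 : ∀ j, 1 + x j ≠ 0 := fun j => norm_pos_iff.1 <|
    (mul_pos (by linarith) (hcos j)).trans_le
      (Complex.mul_cos_half_le_norm_one_add_mul_exp b (α j))
  have hderiv : deriv F z
      = ∑ j, deriv (f j) z * (1 + x j)⁻¹ + ∑ j, deriv (g j) z * (1 + (x j)⁻¹)⁻¹ := by
    have hxinv : ∀ j, (b : ℂ)⁻¹ * Complex.exp (-(Complex.I * α j)) = (x j)⁻¹ := fun j => by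
      rw [hx_def, mul_inv, Complex.exp_neg]
    simp only [hF, hxinv, div_eq_mul_inv]
    refine HasDerivAt.deriv (.add (.fun_sum fun j _ => .mul_const ?_ _)
      (.fun_sum fun j _ => .mul_const ?_ _))
    exacts [(hf j).hasDerivAt (isOpen_ball.mem_nhds hz),
      (hg j).hasDerivAt (isOpen_ball.mem_nhds hz)]
  have hterm : ∀ j, (ρ ^ 2 + ‖z‖ ^ 2) / (ρ ^ 2 - ‖z‖ ^ 2)
        - 2 * ‖z‖ * ρ / (ρ ^ 2 - ‖z‖ ^ 2) * (1 / Real.cos (α j / 2))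
      ≤ (deriv (f j) z * (1 + x j)⁻¹).re + (deriv (g j) z * (1 + (x j)⁻¹)⁻¹).re := fun j =>
    Complex.sub_mul_le_re_mul_add_re_mul
      (Complex.norm_sub_le_of_re_pos ((hf j).deriv isOpen_ball) (hf0 j) (hfre j) hrρ)
      (Complex.norm_sub_le_of_re_pos ((hg j).deriv isOpen_ball) (hg0 j) (hgre j) hrρ)
      (inv_one_add_add_inv_one_add_inv (hx j) (hx1 j))
      (Complex.norm_inv_one_add_mul_exp_add_le hb (hcos j))
  have hD : ρ ^ 2 - ‖z‖ ^ 2 ≠ 0 := by nlinarith [norm_nonneg z]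
  calc _ = ∑ j, ((ρ ^ 2 + ‖z‖ ^ 2) / (ρ ^ 2 - ‖z‖ ^ 2)
        - 2 * ‖z‖ * ρ / (ρ ^ 2 - ‖z‖ ^ 2) * (1 / Real.cos (α j / 2))) := by
        rw [sum_sub_distrib, sum_const, card_univ, Fintype.card_fin, ← mul_sum, ← hS,
          nsmul_eq_mul]
        field_simp
        ring
    _ ≤ _ := sum_le_sum fun j _ => hterm j
    _ = _ := by rw [hderiv, Complex.add_re, Complex.re_sum, Complex.re_sum, sum_add_distrib]

/-- quantitative lower bound `Re F′(z) ≥ (n r² − 2 r ρ S + n ρ²)/(ρ² − r²)`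
for the general combination of functions with derivative of positive real part. -/
theorem stmt_8 (ρ : ℝ) (hρ : ρ ∈ Set.Ioc (0 : ℝ) 1) (n : ℕ) (hn : 1 ≤ n)
    (b : ℝ) (hb : 0 < b)
    (α : Fin n → ℝ) (hα : ∀ j, α j ∈ Set.Ico (0 : ℝ) π)
    (S : ℝ) (hS : S = ∑ j, 1 / Real.cos (α j / 2))
    (f g : Fin n → ℂ → ℂ)
    (hf : ∀ j, DifferentiableOn ℂ (f j) (Metric.ball 0 ρ))
    (hg : ∀ j, DifferentiableOn ℂ (g j) (Metric.ball 0 ρ))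
    (hf0 : ∀ j, deriv (f j) 0 = 1) (hg0 : ∀ j, deriv (g j) 0 = 1)
    (hfre : ∀ j, ∀ z ∈ Metric.ball (0 : ℂ) ρ, 0 < (deriv (f j) z).re)
    (hgre : ∀ j, ∀ z ∈ Metric.ball (0 : ℂ) ρ, 0 < (deriv (g j) z).re)
    (F : ℂ → ℂ)
    (hF : F = fun z => ∑ j, f j z / (1 + (b : ℂ) * Complex.exp (Complex.I * (α j : ℂ)))
            + ∑ j, g j z / (1 + (b : ℂ)⁻¹ * Complex.exp (-(Complex.I * (α j : ℂ))))) :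
    ∀ z : ℂ, ∀ r : ℝ, r = ‖z‖ → r < ρ →
      (n * r ^ 2 - 2 * r * ρ * S + n * ρ ^ 2) / (ρ ^ 2 - r ^ 2) ≤ (deriv F z).re :=
  stmt_8_general ρ n b hb α hα S hS f g hf hg hf0 hg0 hfre hgre F hF
end

section
/- Let p ∈ (0, 1), let n ≥ 1, let α_1, …, α_n ∈ [0, π), and set S = Σ_{j=1}^n sec(α_j/2). Define χ(r) = 1 + 2n r²/(1 − r²) − (2r/(1 − r²)) ( (p − r)/(1 − pr) + (1 − pr)/(p − r) ) · S for r ∈ [0, p), and let R be the smallest r ∈ (0, p) with χ(r) = 0 (such an r exists). Let F be analytic on {z : |z| < p} with F′(z) ≠ 0 there, and suppose that for every z with |z| = r < p there exist b ∈ (0,∞) and complex numbers u_1, …, u_n, v_1, …, v_n satisfying |u_j − 2r²/(1 − r²)| ≤ (2r/(1 − r²)) ( (p − r)/(1 − pr) + (1 − pr)/(p − r) ) and the same bound for each v_j, such that z F″(z)/F′(z) = Σ_{j=1}^n u_j/(1 + b e^{iα_j}) + Σ_{j=1}^n v_j/(1 + b^{-1} e^{-iα_j}). Then Re( 1 + z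 F″(z)/F′(z) ) > 0 for all z with |z| < R. -/
/-!
Write `c = 2r²/(1 - r²)` for the centre and `A` for the radius of the `S(p)` disk at `|z| = r`,
and `w = b e^{iα}`. The weights `1/(1 + w)` and `1/(1 + w⁻¹)` add up to `1`, so a pair
`u/(1 + w) + v/(1 + w⁻¹)` equals `c + (u - c)/(1 + w) + (v - c) w/(1 + w)`; as
`|1 + w| ≥ (1 + |w|) cos(α/2)`, its real part is at least `c - A sec(α/2)`. Summing over `j` gives
`Re(1 + zF''/F') ≥ χ(r)`, and `χ(r) > 0` for `r < R` because `χ(0) = 1` and `χ` is continuous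
on `[0, p)` with first zero `R`.
-/

open Real Finset

lemma pos_of_continuousOn_Icc_of_ne_zero {f : ℝ → ℝ} {a b : ℝ} (hab : a ≤ b)
    (hf : ContinuousOn f (Set.Icc a b)) (ha : 0 < f a) (hne : ∀ x ∈ Set.Icc a b, f x ≠ 0) :
    0 < f b := by
  by_contra! hb
  obtain ⟨x, hx, hfx⟩ := intermediate_value_Icc' hab hf ⟨hb, ha.le⟩
  exact hne x hx hfx

lemma cos_half_pos_of_mem_Ico {α : ℝ} (hα : α ∈ Set.Ico 0 π) : 0 < Real.cos (α / 2) :=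
  cos_pos_of_mem_Ioo ⟨by linarith [hα.1, pi_pos], by linarith [hα.2]⟩

lemma abs_mul_cos_half_le_norm_one_add_mul_exp (b α : ℝ) :
    |(1 + b) * Real.cos (α / 2)| ≤ ‖1 + (b : ℂ) * Complex.exp (Complex.I * α)‖ := by
  have hcart : 1 + (b : ℂ) * Complex.exp (Complex.I * α)
      = ((1 + b * Real.cos α : ℝ) : ℂ) + ((b * Real.sin α : ℝ) : ℂ) * Complex.I := by
    rw [mul_comm Complex.I, Complex.exp_mul_I]
    push_cast
    ring
  have hnormSq : ‖1 + (b : ℂ) * Complex.exp (Complex.I * α)‖ ^ 2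
      = 1 + 2 * b * Real.cos α + b ^ 2 := by
    rw [hcart, Complex.sq_norm, Complex.normSq_add_mul_I]
    nlinarith [Real.sin_sq_add_cos_sq α]
  have hcos : Real.cos (α / 2) ^ 2 = (1 + Real.cos α) / 2 := by
    rw [Real.cos_sq, mul_div_cancel₀ _ two_ne_zero]; ring
  rw [← abs_norm]
  apply sq_le_sq.mp
  rw [hnormSq, mul_pow, hcos]
  -- the difference of the two sides is `(1 - b)² (1 - cos α) / 2`
  nlinarith [Real.cos_le_one α, sq_nonneg (1 - b)]

lemma div_one_add_add_div_one_add_inv {K : Type*} [Field K] {w : K} (hw : w ≠ 0)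
    (hw' : 1 + w ≠ 0) (u v c : K) :
    u / (1 + w) + v / (1 + w⁻¹) = c + (u - c) / (1 + w) + (v - c) * w / (1 + w) := by
  have hw_inv : 1 + w⁻¹ = (1 + w) / w := by field_simp; ring
  rw [hw_inv]
  field_simp
  ring

lemma sub_div_cos_half_le_re_div_one_add_add_div_one_add_inv {b α c A : ℝ} (hb : 0 < b)
    (hα : 0 < Real.cos (α / 2)) {u v : ℂ} (hu : ‖u - c‖ ≤ A) (hv : ‖v - c‖ ≤ A) :
    c - A / Real.cos (α / 2) ≤ (u / (1 + (b : ℂ) * Complex.exp (Complex.I * α))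
        + v / (1 + (b : ℂ)⁻¹ * Complex.exp (-(Complex.I * α)))).re := by
  set w : ℂ := b * Complex.exp (Complex.I * α)
  have hw : ‖w‖ = b := by simp [w, Complex.norm_exp, abs_of_pos hb]
  have hw_le : (1 + b) * Real.cos (α / 2) ≤ ‖1 + w‖ :=
    (le_abs_self _).trans (abs_mul_cos_half_le_norm_one_add_mul_exp b α)
  have hw_pos : 0 < ‖1 + w‖ := lt_of_lt_of_le (by positivity) hw_le
  have hinv : (b : ℂ)⁻¹ * Complex.exp (-(Complex.I * α)) = w⁻¹ := by
    rw [Complex.exp_neg, mul_inv]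
  have hA : 0 ≤ A := (norm_nonneg (u - c)).trans hu
  have herr : ‖(u - c) / (1 + w) + (v - c) * w / (1 + w)‖ ≤ A / Real.cos (α / 2) :=
    calc ‖(u - c) / (1 + w) + (v - c) * w / (1 + w)‖
        ≤ ‖u - c‖ / ‖1 + w‖ + ‖v - c‖ * b / ‖1 + w‖ := by
          simpa only [norm_div, norm_mul, hw] using
            norm_add_le ((u - c) / (1 + w)) ((v - c) * w / (1 + w))
      _ ≤ A * (1 + b) / ‖1 + w‖ := by
          rw [← add_div, mul_add, mul_one]
          gcongr
      _ ≤ A / Real.cos (α / 2) := by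
          rw [div_le_div_iff₀ hw_pos hα, mul_assoc]
          gcongr
  rw [hinv, div_one_add_add_div_one_add_inv (by simp [w, hb.ne']) (norm_pos_iff.mp hw_pos) u v c,
    add_assoc, Complex.add_re, Complex.ofReal_re]
  linarith [neg_le_of_abs_le ((Complex.abs_re_le_norm _).trans herr)]

lemma sub_sum_div_cos_half_le_re_sum {ι : Type*} [Fintype ι] {α : ι → ℝ}
    (hα : ∀ j, 0 < Real.cos (α j / 2)) {b c A : ℝ} (hb : 0 < b) {u v : ι → ℂ}
    (hu : ∀ j, ‖u j - c‖ ≤ A) (hv : ∀ j, ‖v j - c‖ ≤ A) :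
    Fintype.card ι * c - A * ∑ j, 1 / Real.cos (α j / 2)
      ≤ (∑ j, u j / (1 + (b : ℂ) * Complex.exp (Complex.I * (α j : ℂ)))
          + ∑ j, v j / (1 + (b : ℂ)⁻¹ * Complex.exp (-(Complex.I * (α j : ℂ))))).re := by
  have hlhs : Fintype.card ι * c - A * ∑ j, 1 / Real.cos (α j / 2)
      = ∑ j, (c - A / Real.cos (α j / 2)) := by
    simp only [sum_sub_distrib, sum_const, card_univ, nsmul_eq_mul, mul_sum, mul_one_div]
  rw [hlhs, ← sum_add_distrib, Complex.re_sum]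
  exact sum_le_sum fun j _ =>
    sub_div_cos_half_le_re_div_one_add_add_div_one_add_inv hb (hα j) (hu j) (hv j)

lemma continuousOn_chi {p r : ℝ} (hp : p < 1) (hrp : r < p) (n : ℕ) (S : ℝ) :
    ContinuousOn (fun x : ℝ => 1 + 2 * n * x ^ 2 / (1 - x ^ 2)
      - (2 * x / (1 - x ^ 2)) * ((p - x) / (1 - p * x) + (1 - p * x) / (p - x)) * S)
      (Set.Icc 0 r) := by
  intro x hx
  have hxp : x < p := hx.2.trans_lt hrp
  apply ContinuousAt.continuousWithinAt
  fun_prop (disch := nlinarith [hx.1])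

theorem stmt_9_general (p : ℝ) (hp : p ∈ Set.Ioo (0 : ℝ) 1) (n : ℕ)
    (α : Fin n → ℝ) (hα : ∀ j, α j ∈ Set.Ico (0 : ℝ) π)
    (S : ℝ) (hS : S = ∑ j, 1 / Real.cos (α j / 2))
    (χ : ℝ → ℝ)
    (hχ : ∀ r ∈ Set.Ico (0 : ℝ) p,
      χ r = 1 + 2 * n * r ^ 2 / (1 - r ^ 2)
        - (2 * r / (1 - r ^ 2)) * ((p - r) / (1 - p * r) + (1 - p * r) / (p - r)) * S)
    (R : ℝ) (hR : R ∈ Set.Ioo (0 : ℝ) p)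
    (hRmin : ∀ r ∈ Set.Ioo (0 : ℝ) p, χ r = 0 → R ≤ r)
    (F : ℂ → ℂ)
    (hdec : ∀ z ∈ Metric.ball (0 : ℂ) p, ∀ r : ℝ, r = ‖z‖ →
      ∃ b : ℝ, 0 < b ∧ ∃ u v : Fin n → ℂ,
        (∀ j, ‖u j - ((2 * r ^ 2 / (1 - r ^ 2) : ℝ) : ℂ)‖
            ≤ (2 * r / (1 - r ^ 2)) * ((p - r) / (1 - p * r) + (1 - p * r) / (p - r))) ∧
        (∀ j, ‖v j - ((2 * r ^ 2 / (1 - r ^ 2) : ℝ) : ℂ)‖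
            ≤ (2 * r / (1 - r ^ 2)) * ((p - r) / (1 - p * r) + (1 - p * r) / (p - r))) ∧
        z * deriv (deriv F) z / deriv F z
          = ∑ j, u j / (1 + (b : ℂ) * Complex.exp (Complex.I * (α j : ℂ)))
            + ∑ j, v j / (1 + (b : ℂ)⁻¹ * Complex.exp (-(Complex.I * (α j : ℂ))))) :
    ∀ z : ℂ, ‖z‖ < R →
      0 < (1 + z * deriv (deriv F) z / deriv F z).re := by
  intro z hzR
  have hzp : ‖z‖ < p := hzR.trans hR.2
  obtain ⟨b, hb, u, v, hu, hv, hdecz⟩ := hdec z (mem_ball_zero_iff.mpr hzp) ‖z‖ rfl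
  have hχ0 : χ 0 = 1 := by simp [hχ 0 ⟨le_rfl, hp.1⟩]
  have hχz : 0 < χ ‖z‖ := by
    refine pos_of_continuousOn_Icc_of_ne_zero (norm_nonneg z)
      ((continuousOn_chi hp.2 hzp n S).congr fun x hx =>
        hχ x ⟨hx.1, hx.2.trans_lt hzp⟩) (by rw [hχ0]; exact one_pos) fun x hx hχx => ?_
    have hx0 : 0 < x := hx.1.lt_of_ne (by rintro rfl; simp [hχ0] at hχx)
    linarith [hRmin x ⟨hx0, hx.2.trans_lt hzp⟩ hχx, hx.2]
  have hre := sub_sum_div_cos_half_le_re_sum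
    (fun j => cos_half_pos_of_mem_Ico (hα j)) hb hu hv
  rw [Fintype.card_fin, ← hS, ← hdecz, ← mul_div_assoc, ← mul_assoc, mul_comm (n : ℝ) 2] at hre
  rw [hχ ‖z‖ ⟨norm_nonneg z, hzp⟩] at hχz
  rw [Complex.add_re, Complex.one_re]
  linarith

/-- radius of convexity for functions whose logarithmic second-derivative
expression decomposes as a combination of terms satisfying the estimate valid for `S(p)`. -/
theorem stmt_9 (p : ℝ) (hp : p ∈ Set.Ioo (0 : ℝ) 1) (n : ℕ) (hn : 1 ≤ n)
    (α : Fin n → ℝ) (hα : ∀ j, α j ∈ Set.Ico (0 : ℝ) π)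
    (S : ℝ) (hS : S = ∑ j, 1 / Real.cos (α j / 2))
    (χ : ℝ → ℝ)
    (hχ : ∀ r ∈ Set.Ico (0 : ℝ) p,
      χ r = 1 + 2 * n * r ^ 2 / (1 - r ^ 2)
        - (2 * r / (1 - r ^ 2)) * ((p - r) / (1 - p * r) + (1 - p * r) / (p - r)) * S)
    (R : ℝ) (hR : R ∈ Set.Ioo (0 : ℝ) p) (hRzero : χ R = 0)
    (hRmin : ∀ r ∈ Set.Ioo (0 : ℝ) p, χ r = 0 → R ≤ r)
    (F : ℂ → ℂ) (hF : DifferentiableOn ℂ F (Metric.ball 0 p))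
    (hF' : ∀ z ∈ Metric.ball (0 : ℂ) p, deriv F z ≠ 0)
    (hdec : ∀ z ∈ Metric.ball (0 : ℂ) p, ∀ r : ℝ, r = ‖z‖ →
      ∃ b : ℝ, 0 < b ∧ ∃ u v : Fin n → ℂ,
        (∀ j, ‖u j - ((2 * r ^ 2 / (1 - r ^ 2) : ℝ) : ℂ)‖
            ≤ (2 * r / (1 - r ^ 2)) * ((p - r) / (1 - p * r) + (1 - p * r) / (p - r))) ∧
        (∀ j, ‖v j - ((2 * r ^ 2 / (1 - r ^ 2) : ℝ) : ℂ)‖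
            ≤ (2 * r / (1 - r ^ 2)) * ((p - r) / (1 - p * r) + (1 - p * r) / (p - r))) ∧
        z * deriv (deriv F) z / deriv F z
          = ∑ j, u j / (1 + (b : ℂ) * Complex.exp (Complex.I * (α j : ℂ)))
            + ∑ j, v j / (1 + (b : ℂ)⁻¹ * Complex.exp (-(Complex.I * (α j : ℂ))))) :
    ∀ z : ℂ, ‖z‖ < R →
      0 < (1 + z * deriv (deriv F) z / deriv F z).re :=
  stmt_9_general p hp n α hα S hS χ hχ R hR hRmin F hdec
end
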